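/- Let Sω be the group generated by σ_1, σ_2, σ_3, ... subject to the relations σ_i² = 1, σ_{i+1} σ_i σ_{i+1} = σ_i σ_{i+1} σ_i, and σ_{k+2} σ_j = σ_j σ_{k+2} for j ≤ k. If in the quotient of Sω by one additional relation σ_i = σ_j with i < j, then in this quotient σ_i = σ_j = σ_{j+1}. -/

import Mathlib

open FreeGroup in
/-- The Coxeter relations presenting the infinite symmetric group `Sω` of finitely supported
permutations of `ℕ⁺`: `σ_i² = 1`, `σ_{i+1} σ_i σ_{i+1} = σ_i σ_{i+1} σ_i`, and
`σ_{k+2} σ_j = σ_j σ_{k+2}` for `j ≤ k`. -/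
def SomegaRels : Set (FreeGroup ℕ+) :=
  {w | (∃ i : ℕ+, w = of i * of i) ∨
    (∃ i : ℕ+, w = (of (i + 1) * of i * of (i + 1)) * (of i * of (i + 1) * of i)⁻¹) ∨
    (∃ j k : ℕ+, j ≤ k ∧ w = (of (k + 2) * of j) * (of j * of (k + 2))⁻¹)}

/-- The infinite symmetric group `Sω`, presented by the Coxeter generators `σ_i`. -/
def Somega : Type := PresentedGroup SomegaRels

instance : Group Somega := by unfold Somega; infer_instance

/-- The generator `σ_i` (the transposition of `i` and `i+1`) of `Sω`. -/
def Somega.sigma (i : ℕ+) : Somega := PresentedGroup.of i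

/-
In the quotient, `σ_i = σ_j` commutes with `σ_{j+1}`, because `σ_i` does (as `i ≤ j - 1`).
The braid relation `σ_{j+1} σ_j σ_{j+1} = σ_j σ_{j+1} σ_j` between commuting elements
collapses to `σ_j σ_{j+1}² = σ_j² σ_{j+1}`, and cancelling gives `σ_{j+1} = σ_j`.
-/

theorem eq_of_commute_of_braid {M : Type*} [CancelMonoid M] {a b : M} (hab : Commute a b)
    (hbraid : b * a * b = a * b * a) : a = b := by
  have : a * b * b = a * a * b :=
    calc a * b * b = b * a * b := by rw [hab.eq]
      _ = a * b * a := hbraid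
      _ = a * a * b := by rw [mul_assoc, ← hab.eq, ← mul_assoc]
  exact (mul_left_cancel (mul_right_cancel this)).symm

namespace Somega

theorem sigma_braid (i : ℕ+) :
    sigma (i + 1) * sigma i * sigma (i + 1) = sigma i * sigma (i + 1) * sigma i :=
  PresentedGroup.mk_eq_mk_of_mul_inv_mem (Or.inr (Or.inl ⟨i, rfl⟩))

theorem commute_sigma_add_two {j k : ℕ+} (hjk : j ≤ k) : Commute (sigma j) (sigma (k + 2)) :=
  (PresentedGroup.mk_eq_mk_of_mul_inv_mem (Or.inr (Or.inr ⟨j, k, hjk, rfl⟩))).symm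

end Somega

/-- If in a quotient `X` of `Sω` (given by a homomorphism `f`) the additional relation
`σ_i = σ_j` holds for `i < j`, then `σ_i = σ_j = σ_{j+1}` holds in `X`. -/
theorem somega_sigma_eq_succ {X : Type*} [Group X] (f : Somega →* X)
    (i j : ℕ+) (hij : i < j) (h : f (Somega.sigma i) = f (Somega.sigma j)) :
    f (Somega.sigma i) = f (Somega.sigma (j + 1)) ∧
      f (Somega.sigma j) = f (Somega.sigma (j + 1)) := by
  obtain ⟨k, rfl⟩ := PNat.exists_eq_succ_of_ne_one hij.one_lt.ne'
  have hcomm : Commute (f (Somega.sigma i)) (f (Somega.sigma (k + 1 + 1))) :=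
    (Somega.commute_sigma_add_two (PNat.lt_add_one_iff.mp hij)).map f
  have hbraid := congrArg f (Somega.sigma_braid (k + 1))
  simp only [map_mul, ← h] at hbraid
  have hi := eq_of_commute_of_braid hcomm hbraid
  exact ⟨hi, h ▸ hi⟩
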